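/- Let G be a finite graph whose spectral radius λ₁(G) equals λ and suppose λI − A_G + (1/2)J is positive semidefinite. Then rank(λI − A_G) ≤ rank(λI − A_G + (1/2)J) − 1. -/

import Mathlib

/-! With `M = λI - A_G` and `J` the all-ones matrix, both `M` and `J` are positive semidefinite
(`M` because `λ` is the top eigenvalue), so `ker (M + J/2) = ker M ∩ ker J`. If `x` is a top
eigenvector, then so is `|x|` (Perron–Frobenius for the nonnegative matrix `A_G`), and `J` does
not kill the nonzero nonnegative vector `|x|`. Hence the kernel strictly shrinks when `J/2` is
added, and the rank strictly grows. -/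

open Matrix SimpleGraph Finset
open scoped Classical RealInnerProductSpace

noncomputable section

/-- The adjacency matrix of a graph is Hermitian (real symmetric). -/
lemma adjHerm {V : Type} [Fintype V] [DecidableEq V] (G : SimpleGraph V) :
    (G.adjMatrix ℝ).IsHermitian := by
  have h := G.isSymm_adjMatrix (α := ℝ)
  simpa [Matrix.IsHermitian, Matrix.conjTranspose_eq_transpose_of_trivial] using h

/-- The spectral radius (largest adjacency eigenvalue) `λ₁(G)` of a graph. -/
def specRad {V : Type} [Fintype V] [DecidableEq V] (G : SimpleGraph V) : ℝ :=
  ⨆ i, (adjHerm G).eigenvalues i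

/-- The `j`-th largest adjacency eigenvalue of `G` (1-indexed, with multiplicity):
entry `card V - j` of the increasingly sorted list of eigenvalues. -/
def nthEig {V : Type} [Fintype V] [DecidableEq V] (G : SimpleGraph V) (j : ℕ) : ℝ :=
  (Multiset.sort (Finset.univ.val.map (adjHerm G).eigenvalues) (· ≤ ·)).getD
    (Fintype.card V - j) 0

/-- The multiplicity of `μ` as an adjacency eigenvalue of `G`. -/
def eigMult {V : Type} [Fintype V] [DecidableEq V] (G : SimpleGraph V) (μ : ℝ) : ℕ :=
  Module.finrank ℝ (Module.End.eigenspace (Matrix.toLin' (G.adjMatrix ℝ)) μ)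

/-- The ball of radius `r` around `v`: all vertices at graph distance at most `r` from `v`. -/
def ball {V : Type} (G : SimpleGraph V) (v : V) (r : ℕ) : Set V := {u | G.dist v u ≤ r}

namespace Matrix

variable {n : Type*} [Fintype n]

theorem IsHermitian.exists_mulVec_eq_iSup_eigenvalues [DecidableEq n] [Nonempty n]
    {A : Matrix n n ℝ} (hA : A.IsHermitian) :
    ∃ x : n → ℝ, x ≠ 0 ∧ A *ᵥ x = (⨆ i, hA.eigenvalues i) • x := by
  obtain ⟨i, hi⟩ := exists_eq_ciSup_of_finite (f := hA.eigenvalues)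
  refine ⟨hA.eigenvectorBasis i, fun h => ?_, hi ▸ hA.mulVec_eigenvectorBasis i⟩
  exact hA.eigenvectorBasis.orthonormal.ne_zero i (WithLp.ofLp_injective 2 h)

theorem IsHermitian.posSemidef_smul_one_sub [DecidableEq n] {A : Matrix n n ℝ}
    (hA : A.IsHermitian) {l : ℝ} (hl : ∀ i, hA.eigenvalues i ≤ l) :
    (l • (1 : Matrix n n ℝ) - A).PosSemidef := by
  have hB : (l • (1 : Matrix n n ℝ) - A).IsHermitian :=
    (isHermitian_one.smul (IsSelfAdjoint.all l)).sub hA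
  refine posSemidef_iff_isHermitian_and_spectrum_nonneg.mpr ⟨hB, ?_⟩
  rw [← Algebra.algebraMap_eq_smul_one, ← spectrum.singleton_sub_eq,
    hA.spectrum_real_eq_range_eigenvalues]
  rintro _ ⟨_, rfl, _, ⟨i, rfl⟩, rfl⟩
  exact sub_nonneg.mpr (hl i)

theorem dotProduct_mulVec_le_abs {A : Matrix n n ℝ} (hA : ∀ i j, 0 ≤ A i j) (x : n → ℝ) :
    x ⬝ᵥ A *ᵥ x ≤ |x| ⬝ᵥ A *ᵥ |x| := by
  simp only [dotProduct, mulVec, Finset.mul_sum, Pi.abs_apply]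
  refine Finset.sum_le_sum fun i _ => Finset.sum_le_sum fun j _ => ?_
  calc x i * (A i j * x j) ≤ |x i * (A i j * x j)| := le_abs_self _
    _ = |x i| * (A i j * |x j|) := by rw [abs_mul, abs_mul, abs_of_nonneg (hA i j)]

/-- Passing to `|x|` can only raise the Rayleigh quotient of a nonnegative matrix, and `l` is
already its maximum. -/
theorem mulVec_abs_eq_zero_of_posSemidef [DecidableEq n] {A : Matrix n n ℝ}
    (hA : ∀ i j, 0 ≤ A i j) {l : ℝ} (hM : (l • (1 : Matrix n n ℝ) - A).PosSemidef)
    {x : n → ℝ} (hx : A *ᵥ x = l • x) : (l • (1 : Matrix n n ℝ) - A) *ᵥ |x| = 0 := by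
  refine (hM.dotProduct_mulVec_zero_iff |x|).mp (le_antisymm ?_ (hM.dotProduct_mulVec_nonneg _))
  have habs : |x| ⬝ᵥ |x| = x ⬝ᵥ x := by
    simp only [dotProduct, Pi.abs_apply, abs_mul_abs_self]
  have hquad : x ⬝ᵥ A *ᵥ x = l * (x ⬝ᵥ x) := by rw [hx, dotProduct_smul, smul_eq_mul]
  simp only [star_trivial, sub_mulVec, smul_mulVec, one_mulVec, dotProduct_sub, dotProduct_smul,
    smul_eq_mul, habs]
  linarith [dotProduct_mulVec_le_abs hA x]

theorem PosSemidef.ker_add_le_ker_left {M N : Matrix n n ℝ} (hM : M.PosSemidef)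
    (hN : N.PosSemidef) : LinearMap.ker (M + N).mulVecLin ≤ LinearMap.ker M.mulVecLin := by
  intro x hx
  rw [LinearMap.mem_ker, mulVecLin_apply] at hx ⊢
  refine (hM.dotProduct_mulVec_zero_iff x).mp (le_antisymm ?_ (hM.dotProduct_mulVec_nonneg x))
  have hsum : star x ⬝ᵥ M *ᵥ x + star x ⬝ᵥ N *ᵥ x = 0 := by
    rw [← dotProduct_add, ← add_mulVec, hx, dotProduct_zero]
  linarith [hN.dotProduct_mulVec_nonneg x]

theorem PosSemidef.rank_lt_rank_add {M N : Matrix n n ℝ} (hM : M.PosSemidef) (hN : N.PosSemidef)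
    {x : n → ℝ} (hMx : M *ᵥ x = 0) (hNx : N *ᵥ x ≠ 0) : M.rank < (M + N).rank := by
  have hlt : LinearMap.ker (M + N).mulVecLin < LinearMap.ker M.mulVecLin := by
    refine lt_of_le_of_ne (hM.ker_add_le_ker_left hN) fun h => hNx ?_
    have hx : x ∈ LinearMap.ker (M + N).mulVecLin := h ▸ hMx
    rwa [LinearMap.mem_ker, mulVecLin_apply, add_mulVec, hMx, zero_add] at hx
  have hker := Submodule.finrank_lt_finrank_of_lt hlt
  have hM_dim := LinearMap.finrank_range_add_finrank_ker M.mulVecLin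
  have hMN_dim := LinearMap.finrank_range_add_finrank_ker (M + N).mulVecLin
  rw [rank, rank]
  omega

theorem posSemidef_allOnes : (of fun _ _ => (1 : ℝ) : Matrix n n ℝ).PosSemidef := by
  convert posSemidef_vecMulVec_self_star (fun _ : n => (1 : ℝ))
  ext
  simp [vecMulVec]

theorem allOnes_mulVec_ne_zero {x : n → ℝ} (hx : x ≠ 0) (hx₀ : 0 ≤ x) :
    (of fun _ _ => (1 : ℝ) : Matrix n n ℝ) *ᵥ x ≠ 0 := by
  obtain ⟨i, hi⟩ := Function.ne_iff.mp hx
  have hpos : 0 < ∑ j, x j :=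
    Finset.sum_pos' (fun j _ => hx₀ j) ⟨i, Finset.mem_univ i, (hx₀ i).lt_of_ne' hi⟩
  intro h
  have := congrFun h i
  simp only [mulVec, dotProduct, of_apply, one_mul, Pi.zero_apply] at this
  linarith

end Matrix

theorem SimpleGraph.adjMatrix_nonneg {V : Type*} (G : SimpleGraph V) [DecidableRel G.Adj]
    (i j : V) : 0 ≤ G.adjMatrix ℝ i j := by
  rw [adjMatrix_apply]
  split_ifs <;> norm_num

theorem stmt11_general {V : Type} [Fintype V] [DecidableEq V] [Nonempty V] (G : SimpleGraph V)
    (l : ℝ) (hl : specRad G = l) :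
    (l • (1 : Matrix V V ℝ) - G.adjMatrix ℝ).rank ≤
      (l • (1 : Matrix V V ℝ) - G.adjMatrix ℝ
        + (1 / 2 : ℝ) • (Matrix.of fun _ _ => (1 : ℝ))).rank - 1 := by
  obtain ⟨x, hx0, hx⟩ := (adjHerm G).exists_mulVec_eq_iSup_eigenvalues
  rw [← specRad, hl] at hx
  have hM : (l • (1 : Matrix V V ℝ) - G.adjMatrix ℝ).PosSemidef :=
    (adjHerm G).posSemidef_smul_one_sub fun i =>
      hl ▸ le_ciSup (Set.finite_range _).bddAbove i
  have hJ : ((1 / 2 : ℝ) • (Matrix.of fun _ _ => (1 : ℝ)) : Matrix V V ℝ).PosSemidef :=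
    posSemidef_allOnes.smul (by norm_num)
  have hJx :
      ((1 / 2 : ℝ) • (Matrix.of fun _ _ => (1 : ℝ)) : Matrix V V ℝ) *ᵥ |x| ≠ 0 := by
    rw [smul_mulVec, smul_ne_zero_iff]
    exact ⟨by norm_num, allOnes_mulVec_ne_zero (mt (Pi.abs_eq_zero x).mp hx0) (abs_nonneg x)⟩
  have hMx := mulVec_abs_eq_zero_of_posSemidef G.adjMatrix_nonneg hM hx
  have hrank := hM.rank_lt_rank_add hJ hMx hJx
  omega

/-- If `λ₁(G) = λ` and `λI - A_G + (1/2)J` is positive semidefinite, then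
`rank(λI - A_G) ≤ rank(λI - A_G + (1/2)J) - 1`. -/
theorem stmt11 {V : Type} [Fintype V] [DecidableEq V] [Nonempty V] (G : SimpleGraph V)
    (l : ℝ) (hl : specRad G = l)
    (hpsd : (l • (1 : Matrix V V ℝ) - G.adjMatrix ℝ
        + (1 / 2 : ℝ) • (Matrix.of fun _ _ => (1 : ℝ))).PosSemidef) :
    (l • (1 : Matrix V V ℝ) - G.adjMatrix ℝ).rank ≤
      (l • (1 : Matrix V V ℝ) - G.adjMatrix ℝ
        + (1 / 2 : ℝ) • (Matrix.of fun _ _ => (1 : ℝ))).rank - 1 :=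
  stmt11_general G l hl

end
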